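/- arXiv:2212.10945 — 3 statements merged into one kernel-verified Lean document; each statement's English description precedes it below -/
import Mathlib

section
/- Along trajectories of the planar system (ẋ, ẏ) = v_L(x,y), the Lyapunov function L₁(r) = ½(r^β − r_d^β)² satisfies dL₁/dt = −(2β v_d r^(β−1) / (r^β + r_d^β)) · L₁(r) ≤ 0, where r(t) = √(x(t)² + y(t)²). -/
/-!
The rotational part `(2y√(r^β r_d^β), -2x√(r^β r_d^β))` of `v_L` is orthogonal to `(x, y)`, so
only the radial part moves `r`: `ṙ = (x ẋ + y ẏ) / r = -v_d (r^β - r_d^β) / (r^β + r_d^β)`.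
The chain rule then gives `dL₁/dt = (r^β - r_d^β) · β r^(β-1) ṙ`, which is the stated multiple
of `L₁`, with a nonpositive factor.
-/

noncomputable def vL (vd rd : ℝ) (β : ℕ) (x y : ℝ) : ℝ × ℝ :=
  let r := Real.sqrt (x ^ 2 + y ^ 2)
  ((-vd / (r * (r ^ β + rd ^ β))) *
      (x * (r ^ β - rd ^ β) + 2 * y * Real.sqrt (r ^ β * rd ^ β)),
   (-vd / (r * (r ^ β + rd ^ β))) *
      (y * (r ^ β - rd ^ β) - 2 * x * Real.sqrt (r ^ β * rd ^ β)))

theorem mul_vL_fst_add_mul_vL_snd (vd rd : ℝ) (β : ℕ) (x y : ℝ) :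
    x * (vL vd rd β x y).1 + y * (vL vd rd β x y).2 =
      -vd * √(x ^ 2 + y ^ 2) * (√(x ^ 2 + y ^ 2) ^ β - rd ^ β) /
        (√(x ^ 2 + y ^ 2) ^ β + rd ^ β) := by
  have hsq : x ^ 2 + y ^ 2 = √(x ^ 2 + y ^ 2) ^ 2 := (Real.sq_sqrt (by positivity)).symm
  set r := √(x ^ 2 + y ^ 2)
  calc x * (vL vd rd β x y).1 + y * (vL vd rd β x y).2
      = -vd / (r * (r ^ β + rd ^ β)) * ((x ^ 2 + y ^ 2) * (r ^ β - rd ^ β)) := by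
        simp only [vL]; ring
    _ = _ := by
        rw [hsq]
        rcases eq_or_ne r 0 with hr | hr
        · simp [hr]
        · field_simp

theorem HasDerivAt.sqrt_sq_add_sq {x y : ℝ → ℝ} {x' y' t : ℝ} (hx : HasDerivAt x x' t)
    (hy : HasDerivAt y y' t) (h : x t ^ 2 + y t ^ 2 ≠ 0) :
    HasDerivAt (fun s => √(x s ^ 2 + y s ^ 2))
      ((x t * x' + y t * y') / √(x t ^ 2 + y t ^ 2)) t := by
  convert ((hx.fun_pow 2).fun_add (hy.fun_pow 2)).sqrt h using 1
  field_simp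
  push_cast
  ring

theorem hasDerivAt_radius_of_vL (vd rd : ℝ) (β : ℕ) {x y : ℝ → ℝ} {t : ℝ}
    (h : x t ^ 2 + y t ^ 2 ≠ 0) (hx : HasDerivAt x (vL vd rd β (x t) (y t)).1 t)
    (hy : HasDerivAt y (vL vd rd β (x t) (y t)).2 t) :
    HasDerivAt (fun s => √(x s ^ 2 + y s ^ 2))
      (-vd * (√(x t ^ 2 + y t ^ 2) ^ β - rd ^ β) / (√(x t ^ 2 + y t ^ 2) ^ β + rd ^ β)) t := by
  convert hx.sqrt_sq_add_sq hy h using 1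
  rw [mul_vL_fst_add_mul_vL_snd]
  field_simp [Real.sqrt_ne_zero'.2 (lt_of_le_of_ne (by positivity) h.symm)]

theorem stmt1_general (vd rd : ℝ) (β : ℕ) (hvd : 0 < vd) (hrd : 0 < rd)
    (x y : ℝ → ℝ) (t : ℝ)
    (r : ℝ → ℝ) (hr : ∀ s, r s = Real.sqrt (x s ^ 2 + y s ^ 2))
    (L₁ : ℝ → ℝ) (hL : ∀ s, L₁ s = (1 / 2) * (r s ^ β - rd ^ β) ^ 2)
    (hrpos : 0 < r t)
    (hx : HasDerivAt x (vL vd rd β (x t) (y t)).1 t)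
    (hy : HasDerivAt y (vL vd rd β (x t) (y t)).2 t) :
    HasDerivAt L₁ (-(2 * β * vd * r t ^ (β - 1) / (r t ^ β + rd ^ β)) * L₁ t) t ∧
      -(2 * β * vd * r t ^ (β - 1) / (r t ^ β + rd ^ β)) * L₁ t ≤ 0 := by
  have hxy : x t ^ 2 + y t ^ 2 ≠ 0 := by
    rintro h
    simp [hr t, h] at hrpos
  have hr' : HasDerivAt r (-vd * (r t ^ β - rd ^ β) / (r t ^ β + rd ^ β)) t := by
    rw [hr t, funext hr]
    exact hasDerivAt_radius_of_vL vd rd β hxy hx hy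
  have hsum : 0 < r t ^ β + rd ^ β := by positivity
  constructor
  · rw [funext hL]
    refine ((((hr'.fun_pow β).sub_const (rd ^ β)).fun_pow 2).const_mul (1 / 2)).congr_deriv ?_
    push_cast
    field_simp
  · have hL₁ : 0 ≤ L₁ t := by rw [hL t]; positivity
    exact mul_nonpos_of_nonpos_of_nonneg (neg_nonpos.2 (by positivity)) hL₁

/-- Along trajectories of `(ẋ, ẏ) = v_L(x, y)`, the Lyapunov function
`L₁(r) = ½ (r^β - r_d^β)²` satisfies
`dL₁/dt = -(2 β v_d r^(β-1) / (r^β + r_d^β)) · L₁(r) ≤ 0`. -/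
theorem stmt1 (vd rd : ℝ) (β : ℕ) (hvd : 0 < vd) (hrd : 0 < rd) (hβ : 1 ≤ β)
    (x y : ℝ → ℝ) (t : ℝ)
    (r : ℝ → ℝ) (hr : ∀ s, r s = Real.sqrt (x s ^ 2 + y s ^ 2))
    (L₁ : ℝ → ℝ) (hL : ∀ s, L₁ s = (1 / 2) * (r s ^ β - rd ^ β) ^ 2)
    (hrpos : 0 < r t)
    (hx : HasDerivAt x (vL vd rd β (x t) (y t)).1 t)
    (hy : HasDerivAt y (vL vd rd β (x t) (y t)).2 t) :
    HasDerivAt L₁ (-(2 * β * vd * r t ^ (β - 1) / (r t ^ β + rd ^ β)) * L₁ t) t ∧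
      -(2 * β * vd * r t ^ (β - 1) / (r t ^ β + rd ^ β)) * L₁ t ≤ 0 :=
  stmt1_general vd rd β hvd hrd x y t r hr L₁ hL hrpos hx hy
end

section
/- Consider the scalar ODE ṙ = −v_d (r^β − r_d^β)/(r^β + r_d^β) with r(0) > 0. Then r(t) > 0 for all t ≥ 0 and r(t) converges to r_d as t → ∞. -/
/-!
Constant barriers trap the solution: below `r_d` the field pushes `r` up and above `r_d` it
pushes it down, so `r` stays in a compact interval `[a, b] ⊂ (0, ∞)` containing `r(0)` and `r_d`.
On such an interval `(x - r_d)(x^β - r_d^β) ≥ r_d^(β-1) (x - r_d)²` and `x^β + r_d^β ≤ b^β + r_d^β`,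
so the Lyapunov function `V = (r - r_d)²` satisfies `V' ≤ -c V` with `c > 0`, and Grönwall gives
`V(t) ≤ V(0) e^(-c t) → 0`.
-/

open Filter Topology

section AutonomousODE

variable {F r : ℝ → ℝ} (hode : ∀ t, 0 ≤ t → HasDerivAt r (F (r t)) t)
include hode

theorem le_of_hasDerivAt_of_neg_at_barrier {b : ℝ} (h0 : r 0 ≤ b) (hb : F b < 0) :
    ∀ t, 0 ≤ t → r t ≤ b := fun t ht =>
  image_le_of_deriv_right_lt_deriv_boundary' (b := t) (f' := fun s => F (r s)) (B' := fun _ => 0)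
    (fun s hs => (hode s hs.1).continuousAt.continuousWithinAt)
    (fun s hs => (hode s hs.1).hasDerivWithinAt) h0 continuousOn_const
    (fun _ _ => hasDerivWithinAt_const _ _ _) (fun _ _ hs => hs ▸ hb) ⟨ht, le_rfl⟩

theorem ge_of_hasDerivAt_of_pos_at_barrier {a : ℝ} (h0 : a ≤ r 0) (ha : 0 < F a) :
    ∀ t, 0 ≤ t → a ≤ r t := fun t ht =>
  image_le_of_deriv_right_lt_deriv_boundary' (b := t) (f' := fun _ => 0) (B' := fun s => F (r s))
    continuousOn_const (fun _ _ => hasDerivWithinAt_const _ _ _) h0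
    (fun s hs => (hode s hs.1).continuousAt.continuousWithinAt)
    (fun s hs => (hode s hs.1).hasDerivWithinAt) (fun _ _ hs => hs ▸ ha) ⟨ht, le_rfl⟩

theorem sq_sub_le_mul_exp_of_lyapunov {p c : ℝ}
    (hV : ∀ t, 0 ≤ t → 2 * (r t - p) * F (r t) ≤ -c * (r t - p) ^ 2) :
    ∀ t, 0 ≤ t → (r t - p) ^ 2 ≤ (r 0 - p) ^ 2 * Real.exp (-c * t) := by
  have hderiv : ∀ t, 0 ≤ t →
      HasDerivAt (fun s => (r s - p) ^ 2) (2 * (r t - p) * F (r t)) t := fun t ht =>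
    (((hode t ht).sub_const p).pow 2).congr_deriv (by push_cast; ring)
  intro t ht
  simpa [gronwallBound_ε0] using
    le_gronwallBound_of_liminf_deriv_right_le (f := fun s => (r s - p) ^ 2) (K := -c) (ε := 0)
      (fun s hs => (hderiv s hs.1).continuousAt.continuousWithinAt)
      (fun s hs _ => (hderiv s hs.1).hasDerivWithinAt.liminf_right_slope_le) le_rfl
      (fun s hs => by rw [add_zero]; exact hV s hs.1) t ⟨ht, le_rfl⟩

theorem tendsto_of_lyapunov {p c : ℝ} (hc : 0 < c)
    (hV : ∀ t, 0 ≤ t → 2 * (r t - p) * F (r t) ≤ -c * (r t - p) ^ 2) :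
    Tendsto r atTop (𝓝 p) := by
  have hbound := sq_sub_le_mul_exp_of_lyapunov hode hV
  have hexp : Tendsto (fun t => (r 0 - p) ^ 2 * Real.exp (-c * t)) atTop (𝓝 0) := by
    simpa using (Real.tendsto_exp_atBot.comp
      (tendsto_id.const_mul_atTop_of_neg (neg_neg_of_pos hc))).const_mul ((r 0 - p) ^ 2)
  have hsq : Tendsto (fun t => (r t - p) ^ 2) atTop (𝓝 0) :=
    tendsto_of_tendsto_of_tendsto_of_le_of_le' tendsto_const_nhds hexp
      (Eventually.of_forall fun t => sq_nonneg _)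
      (eventually_ge_atTop 0 |>.mono hbound)
  rw [tendsto_iff_norm_sub_tendsto_zero]
  simpa [Real.sqrt_sq_eq_abs] using hsq.sqrt

end AutonomousODE

theorem pow_pred_mul_sq_sub_le {x y : ℝ} (hx : 0 ≤ x) (hy : 0 ≤ y) {n : ℕ} (hn : 1 ≤ n) :
    y ^ (n - 1) * (x - y) ^ 2 ≤ (x - y) * (x ^ n - y ^ n) := by
  have hy_le_sum : y ^ (n - 1) ≤ ∑ i ∈ Finset.range n, x ^ i * y ^ (n - 1 - i) := by
    simpa using Finset.single_le_sum (f := fun i => x ^ i * y ^ (n - 1 - i))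
      (fun i _ => by positivity) (Finset.mem_range.2 (by omega : 0 < n))
  calc y ^ (n - 1) * (x - y) ^ 2
      ≤ (∑ i ∈ Finset.range n, x ^ i * y ^ (n - 1 - i)) * (x - y) ^ 2 := by gcongr
    _ = (x - y) * (x ^ n - y ^ n) := by rw [← geom_sum₂_mul]; ring

noncomputable def radialSpeed (vd rd : ℝ) (β : ℕ) (x : ℝ) : ℝ :=
  -vd * (x ^ β - rd ^ β) / (x ^ β + rd ^ β)

section RadialSpeed

variable {vd rd : ℝ} {β : ℕ} (hvd : 0 < vd) (hrd : 0 < rd) (hβ : 1 ≤ β)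
include hvd hrd hβ

theorem radialSpeed_pos {x : ℝ} (hx : 0 ≤ x) (hxrd : x < rd) : 0 < radialSpeed vd rd β x := by
  have : x ^ β < rd ^ β := pow_lt_pow_left₀ hxrd hx (by omega)
  unfold radialSpeed
  exact div_pos (mul_pos_of_neg_of_neg (by linarith) (by linarith)) (by positivity)

theorem radialSpeed_neg {x : ℝ} (hxrd : rd < x) : radialSpeed vd rd β x < 0 := by
  have : rd ^ β < x ^ β := pow_lt_pow_left₀ hxrd hrd.le (by omega)
  unfold radialSpeed
  exact div_neg_of_neg_of_pos (mul_neg_of_neg_of_pos (by linarith) (by linarith))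
    (by have := hrd.le.trans hxrd.le; positivity)

theorem two_mul_sub_mul_radialSpeed_le {x b : ℝ} (hx : 0 ≤ x) (hxb : x ≤ b) :
    2 * (x - rd) * radialSpeed vd rd β x
      ≤ -(2 * vd * rd ^ (β - 1) / (b ^ β + rd ^ β)) * (x - rd) ^ 2 := by
  have hb : 0 ≤ b := hx.trans hxb
  have hden : x ^ β + rd ^ β ≤ b ^ β + rd ^ β := by gcongr
  have hnum := pow_pred_mul_sq_sub_le hx hrd.le hβ
  have hnum_nonneg : 0 ≤ (x - rd) * (x ^ β - rd ^ β) := le_trans (by positivity) hnum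
  calc 2 * (x - rd) * radialSpeed vd rd β x
      = -(2 * vd * ((x - rd) * (x ^ β - rd ^ β)) / (x ^ β + rd ^ β)) := by
        unfold radialSpeed; ring
    _ ≤ -(2 * vd * ((x - rd) * (x ^ β - rd ^ β)) / (b ^ β + rd ^ β)) := by
        gcongr
    _ ≤ -(2 * vd * (rd ^ (β - 1) * (x - rd) ^ 2) / (b ^ β + rd ^ β)) := by
        gcongr
    _ = _ := by ring

end RadialSpeed

/-- For the scalar ODE `ṙ = -v_d (r^β - r_d^β)/(r^β + r_d^β)` with `r(0) > 0`,
the solution stays positive and converges to `r_d` as `t → ∞`. -/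
theorem stmt4 (vd rd : ℝ) (β : ℕ) (hvd : 0 < vd) (hrd : 0 < rd) (hβ : 1 ≤ β)
    (r : ℝ → ℝ)
    (hode : ∀ t, 0 ≤ t →
      HasDerivAt r (-vd * (r t ^ β - rd ^ β) / (r t ^ β + rd ^ β)) t)
    (h0 : 0 < r 0) :
    (∀ t, 0 ≤ t → 0 < r t) ∧
      Tendsto r atTop (nhds rd) := by
  have hode' : ∀ t, 0 ≤ t → HasDerivAt r (radialSpeed vd rd β (r t)) t := hode
  set a := min (r 0) rd / 2
  have ha : 0 < a := by positivity
  have hlower : ∀ t, 0 ≤ t → a ≤ r t :=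
    ge_of_hasDerivAt_of_pos_at_barrier hode' (by grind)
      (radialSpeed_pos hvd hrd hβ ha.le (by grind))
  have hupper : ∀ t, 0 ≤ t → r t ≤ r 0 + rd :=
    le_of_hasDerivAt_of_neg_at_barrier hode' (by linarith)
      (radialSpeed_neg hvd hrd hβ (by linarith))
  refine ⟨fun t ht => ha.trans_le (hlower t ht), tendsto_of_lyapunov hode' ?_ fun t ht =>
    two_mul_sub_mul_radialSpeed_le hvd hrd hβ (ha.le.trans (hlower t ht)) (hupper t ht)⟩
  positivity
end

section
/- Consider the discrete-time system δ(k+1) = δ(k) − c₁ · sat(δ(k)/c₂), where sat is the standard saturation function. If 0 < c₂ < c₁ < 2c₂, then δ(k) → 0 as k → ∞ for any initial condition δ(0) ∈ ℝ. -/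
/-!
Write `q = c₁/c₂ - 1 ∈ [0, 1)`. Inside the band `|δ| ≤ c₂` the recursion is linear,
`δ(k+1) = -q δ(k)`; outside it `sat` is `±1`, so `|δ|` either drops by `c₁` or lands at
`c₁ - |δ| ≤ q |δ|`. Hence `|δ(k+1)| ≤ max (q |δ(k)|) (|δ(k)| - c₁)`. For such a nonnegative
sequence the second branch can only win while `(1 - q) |δ(k)| > c₁`, which forces a drop by
`c₁` each step and so happens finitely often; from then on `|δ|` decays geometrically.
-/

open Filter

/-- The standard saturation function. -/
noncomputable def sat (r : ℝ) : ℝ :=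
  if r > 1 then 1 else if r < -1 then -1 else r

theorem sat_neg (r : ℝ) : sat (-r) = -sat r := by
  unfold sat
  split_ifs <;> linarith

theorem sat_of_abs_le_one {r : ℝ} (h : |r| ≤ 1) : sat r = r := by
  obtain ⟨hl, hu⟩ := abs_le.mp h
  unfold sat
  rw [if_neg hu.not_gt, if_neg hl.not_gt]

theorem sat_of_one_le {r : ℝ} (h : 1 ≤ r) : sat r = 1 := by
  unfold sat
  split_ifs <;> linarith

theorem abs_sub_mul_sat_le {c₁ c₂ : ℝ} (hc₂ : 0 < c₂) (hc : c₂ ≤ c₁) (x : ℝ) :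
    |x - c₁ * sat (x / c₂)| ≤ max ((c₁ / c₂ - 1) * |x|) (|x| - c₁) := by
  wlog hx : 0 ≤ x generalizing x
  · have h := this (-x) (by linarith)
    rwa [neg_div, sat_neg, abs_neg, mul_neg, ← neg_add', abs_neg, ← sub_eq_add_neg] at h
  rw [abs_of_nonneg hx]
  rcases le_or_gt x c₂ with hband | hout
  · have hsat : sat (x / c₂) = x / c₂ := by
      apply sat_of_abs_le_one
      rwa [abs_of_nonneg (by positivity), div_le_one hc₂]
    have hlin : x - c₁ * (x / c₂) = -((c₁ / c₂ - 1) * x) := by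
      field_simp
      ring
    have hq : 0 ≤ c₁ / c₂ - 1 := by rw [sub_nonneg, one_le_div hc₂]; exact hc
    rw [hsat, hlin, abs_neg, abs_of_nonneg (by positivity)]
    exact le_max_left _ _
  · have hsat : sat (x / c₂) = 1 := sat_of_one_le ((one_le_div hc₂).mpr hout.le)
    rw [hsat, mul_one]
    rcases le_or_gt c₁ x with hfar | hnear
    · rw [abs_of_nonneg (by linarith)]
      exact le_max_right _ _
    · have hxc : c₁ ≤ c₁ / c₂ * x := by
        rw [div_mul_eq_mul_div, le_div_iff₀ hc₂]
        nlinarith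
      rw [abs_of_neg (by linarith)]
      exact le_max_of_le_left (by linarith)

section MaxRecursion

variable {a : ℕ → ℝ} {q c : ℝ}

theorem exists_sub_mul_le_of_le_max (hc : 0 < c) (ha : ∀ k, 0 ≤ a k)
    (h : ∀ k, a (k + 1) ≤ max (q * a k) (a k - c)) : ∃ N, (1 - q) * a N ≤ c := by
  by_contra! hbig
  have hdrop : ∀ n : ℕ, a n ≤ a 0 - n * c := by
    intro n
    induction n with
    | zero => simp
    | succ n ih =>
      have : a (n + 1) ≤ a n - c := by
        have := hbig n
        exact (h n).trans (max_le (by linarith) le_rfl)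
      push_cast
      linarith
  obtain ⟨n, hn⟩ := Archimedean.arch (a 0) hc
  have : a (n + 1) ≤ a 0 - (n + 1) * c := by exact_mod_cast hdrop (n + 1)
  have := ha (n + 1)
  rw [nsmul_eq_mul] at hn
  linarith

theorem le_pow_mul_of_le_max (hq₀ : 0 ≤ q) (hq₁ : q < 1) (ha : ∀ k, 0 ≤ a k)
    (h : ∀ k, a (k + 1) ≤ max (q * a k) (a k - c)) {N : ℕ} (hN : (1 - q) * a N ≤ c) :
    ∀ n, a (N + n) ≤ q ^ n * a N := by
  have hcontract : ∀ k, (1 - q) * a k ≤ c → a (k + 1) ≤ q * a k := fun k hk =>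
    (h k).trans (max_le le_rfl (by linarith))
  intro n
  induction n with
  | zero => simp
  | succ n ih =>
    have hle : a (N + n) ≤ a N :=
      ih.trans (mul_le_of_le_one_left (ha N) (pow_le_one₀ hq₀ hq₁.le))
    have hband : (1 - q) * a (N + n) ≤ c :=
      (mul_le_mul_of_nonneg_left hle (by linarith)).trans hN
    calc a (N + (n + 1)) ≤ q * a (N + n) := hcontract _ hband
      _ ≤ q * (q ^ n * a N) := mul_le_mul_of_nonneg_left ih hq₀
      _ = q ^ (n + 1) * a N := by ring

theorem tendsto_zero_of_le_max (hq₀ : 0 ≤ q) (hq₁ : q < 1) (hc : 0 < c) (ha : ∀ k, 0 ≤ a k)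
    (h : ∀ k, a (k + 1) ≤ max (q * a k) (a k - c)) : Tendsto a atTop (nhds 0) := by
  obtain ⟨N, hN⟩ := exists_sub_mul_le_of_le_max hc ha h
  have hgeom : Tendsto (fun n => q ^ n * a N) atTop (nhds 0) := by
    simpa using (tendsto_pow_atTop_nhds_zero_of_lt_one hq₀ hq₁).mul_const (a N)
  have hshift : Tendsto (fun n => a (n + N)) atTop (nhds 0) := by
    refine squeeze_zero (fun n => ha _) (fun n => ?_) hgeom
    rw [add_comm]
    exact le_pow_mul_of_le_max hq₀ hq₁ ha h hN n
  exact (tendsto_add_atTop_iff_nat N).mp hshift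

end MaxRecursion

/-- For the recursion `δ(k+1) = δ(k) - c₁ sat(δ(k)/c₂)` with `0 < c₂ < c₁ < 2c₂`,
the error `δ(k)` converges to `0` from any initial condition. -/
theorem stmt8 (c₁ c₂ : ℝ) (h1 : 0 < c₂) (h2 : c₂ < c₁) (h3 : c₁ < 2 * c₂)
    (δ : ℕ → ℝ) (hrec : ∀ k, δ (k + 1) = δ k - c₁ * sat (δ k / c₂)) :
    Tendsto δ atTop (nhds 0) := by
  have hq₀ : 0 ≤ c₁ / c₂ - 1 := by rw [sub_nonneg, one_le_div h1]; exact h2.le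
  have hq₁ : c₁ / c₂ - 1 < 1 := by rw [sub_lt_iff_lt_add, div_lt_iff₀ h1]; linarith
  rw [tendsto_zero_iff_abs_tendsto_zero]
  refine tendsto_zero_of_le_max hq₀ hq₁ (h1.trans h2) (fun k => abs_nonneg _) fun k => ?_
  rw [Function.comp_apply, hrec]
  exact abs_sub_mul_sat_le h1 h2.le (δ k)
end
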